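/- Let V be a finite type, K : V → V → ℝ a symmetric nonnegative weight function with zero diagonal, and L(K) its weighted Laplacian. Fix vertices a, b, i, j ∈ V with K i j > 0 and a real number I. Suppose x, y : V → ℝ satisfy L(K) *ᵥ x = I · (e_b − e_a) and L(K) *ᵥ y = I · (e_i − e_j). Then K a b · (y b − y a) = (K a b / K i j) · (K i j · (x i − x j)); i.e., the current across (a,b) caused by a dipole source of strength I across (i,j) equals K a b/K i j times the current across (i,j) caused by a dipole source of strength I across (a,b). -/

import Mathlib

open Matrix

/-- The weighted Laplacian matrix of a weight function `K`: diagonal entries are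
`∑ k, K i k`, off-diagonal entries are `-K i j`. -/
def weightedLaplacian {V : Type*} [Fintype V] [DecidableEq V] (K : V → V → ℝ) :
    Matrix V V ℝ :=
  Matrix.of fun i j => if i = j then ∑ k, K i k else -K i j

/-!
Everything rests on the symmetry of `L = L(K)`. Reciprocity `y ⬝ᵥ L x = x ⬝ᵥ L y` turns the
two source equations into `I (y b - y a) = I (x i - x j)`, which is the claim when `I ≠ 0`. When
`I = 0` both potentials are harmonic, and the quadratic form `x ⬝ᵥ L x = ½ ∑ K p q (x p - x q)²`
shows that a harmonic potential carries no current across any edge, so both sides vanish.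
-/

open Finset

theorem Matrix.IsSymm.dotProduct_mulVec_comm {n R : Type*} [Fintype n] [CommSemiring R]
    {A : Matrix n n R} (hA : A.IsSymm) (x y : n → R) : x ⬝ᵥ A *ᵥ y = y ⬝ᵥ A *ᵥ x := by
  rw [dotProduct_mulVec, ← mulVec_transpose, hA.eq, dotProduct_comm]

theorem dotProduct_smul_single_sub_single {n R : Type*} [Fintype n] [DecidableEq n] [CommRing R]
    (x : n → R) (c : R) (p q : n) :
    x ⬝ᵥ (c • (Pi.single p 1 - Pi.single q 1)) = c * (x p - x q) := by
  rw [dotProduct_smul, dotProduct_sub, dotProduct_single_one, dotProduct_single_one, smul_eq_mul]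

section weightedLaplacian

variable {V : Type*} [Fintype V] [DecidableEq V] {K : V → V → ℝ}

theorem isSymm_weightedLaplacian (hsymm : ∀ i j, K i j = K j i) :
    (weightedLaplacian K).IsSymm := by
  ext u v
  by_cases h : u = v
  · simp [weightedLaplacian, h]
  · simp [weightedLaplacian, h, Ne.symm h, hsymm u v]

theorem weightedLaplacian_eq_diagonal_sub (hdiag : ∀ i, K i i = 0) :
    weightedLaplacian K = diagonal (fun i => ∑ k, K i k) - Matrix.of K := by
  ext u v
  by_cases h : u = v
  · simp [weightedLaplacian, h, hdiag]
  · simp [weightedLaplacian, h]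

theorem weightedLaplacian_mulVec_apply (hdiag : ∀ i, K i i = 0) (x : V → ℝ) (u : V) :
    (weightedLaplacian K *ᵥ x) u = ∑ v, K u v * (x u - x v) := by
  rw [weightedLaplacian_eq_diagonal_sub hdiag, sub_mulVec, Pi.sub_apply, mulVec_diagonal, sum_mul]
  simp only [mulVec, dotProduct, of_apply, ← sum_sub_distrib, mul_sub]

theorem dotProduct_weightedLaplacian_mulVec_self (hsymm : ∀ i j, K i j = K j i)
    (hdiag : ∀ i, K i i = 0) (x : V → ℝ) :
    x ⬝ᵥ weightedLaplacian K *ᵥ x = (∑ p, ∑ q, K p q * (x p - x q) ^ 2) / 2 := by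
  have hform : x ⬝ᵥ weightedLaplacian K *ᵥ x = ∑ p, ∑ q, K p q * (x p * (x p - x q)) := by
    simp only [dotProduct, weightedLaplacian_mulVec_apply hdiag, mul_sum, mul_left_comm (x _)]
  have hswap : ∑ p, ∑ q, K p q * (x p * (x p - x q)) = ∑ p, ∑ q, K p q * (x q * (x q - x p)) := by
    rw [sum_comm]
    simp only [hsymm]
  rw [eq_div_iff two_ne_zero, mul_two, hform]
  nth_rewrite 2 [hswap]
  rw [← sum_add_distrib]
  refine sum_congr rfl fun p _ => ?_
  rw [← sum_add_distrib]
  refine sum_congr rfl fun q _ => ?_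
  ring

theorem mul_sub_eq_zero_of_weightedLaplacian_mulVec_eq_zero (hsymm : ∀ i j, K i j = K j i)
    (hnonneg : ∀ i j, 0 ≤ K i j) (hdiag : ∀ i, K i i = 0) {x : V → ℝ}
    (hx : weightedLaplacian K *ᵥ x = 0) (u v : V) : K u v * (x u - x v) = 0 := by
  have hsum : ∑ p, ∑ q, K p q * (x p - x q) ^ 2 = 0 := by
    have hform := dotProduct_weightedLaplacian_mulVec_self hsymm hdiag x
    rw [hx, dotProduct_zero] at hform
    linarith
  have hterm : K u v * (x u - x v) ^ 2 = 0 := by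
    have hnonneg' : ∀ p q, 0 ≤ K p q * (x p - x q) ^ 2 := fun p q =>
      mul_nonneg (hnonneg p q) (sq_nonneg _)
    rw [Fintype.sum_eq_zero_iff_of_nonneg fun p => sum_nonneg fun q _ => hnonneg' p q] at hsum
    exact congrFun ((Fintype.sum_eq_zero_iff_of_nonneg (hnonneg' u)).mp (congrFun hsum u)) v
  refine pow_eq_zero_iff two_ne_zero |>.mp ?_
  rw [show (K u v * (x u - x v)) ^ 2 = K u v * (K u v * (x u - x v) ^ 2) by ring, hterm, mul_zero]

end weightedLaplacian

/-- The current across `(a,b)` caused by a dipole source of strength `I` across `(i,j)`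
equals `K a b / K i j` times the current across `(i,j)` caused by a dipole source of
strength `I` across `(a,b)`. -/
theorem dipole_current_symmetry
    {V : Type*} [Fintype V] [DecidableEq V] (K : V → V → ℝ)
    (hsymm : ∀ i j, K i j = K j i) (hnonneg : ∀ i j, 0 ≤ K i j)
    (hdiag : ∀ i, K i i = 0)
    (a b i j : V) (hKij : 0 < K i j) (I : ℝ)
    (x y : V → ℝ)
    (hx : (weightedLaplacian K).mulVec x = I • (Pi.single b 1 - Pi.single a 1))
    (hy : (weightedLaplacian K).mulVec y = I • (Pi.single i 1 - Pi.single j 1)) :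
    K a b * (y b - y a) = (K a b / K i j) * (K i j * (x i - x j)) := by
  rcases eq_or_ne I 0 with rfl | hI
  · rw [zero_smul] at hx hy
    rw [hsymm a b, mul_sub_eq_zero_of_weightedLaplacian_mulVec_eq_zero hsymm hnonneg hdiag hy,
      mul_sub_eq_zero_of_weightedLaplacian_mulVec_eq_zero hsymm hnonneg hdiag hx, mul_zero]
  · have hreciprocity : I * (y b - y a) = I * (x i - x j) := by
      simpa only [hx, hy, dotProduct_smul_single_sub_single] using
        (isSymm_weightedLaplacian hsymm).dotProduct_mulVec_comm y x
    rw [mul_left_cancel₀ hI hreciprocity, ← mul_assoc, div_mul_cancel₀ _ hKij.ne']
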